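/- arXiv:1608.08416 — 2 statements merged into one kernel-verified Lean document; each statement's English description precedes it below -/
import Mathlib

section
/- There exists a constant K > 0, independent of the polynomial degree W, such that for every W ∈ ℕ and every real polynomial u(ξ,η) of degree at most W in each of ξ and η separately, ∫_S |∂_ξ∂_η u|² dξ dη ≤ (K/2) ∫_S (|∂²_ξ u|² + |∂²_η u|² + |u|²) dξ dη, where S = (-1,1)². -/
open MeasureTheory

/-- The (i,j)-th partial derivative of `U : ℝ × ℝ → ℝ`:
`i` derivatives in the first (ξ) variable and `j` derivatives in the second (η) variable. -/
noncomputable def pder (i j : ℕ) (U : ℝ × ℝ → ℝ) (p : ℝ × ℝ) : ℝ :=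
  iteratedDeriv i (fun ξ => iteratedDeriv j (fun η => U (ξ, η)) p.2) p.1

/-- The open square `S = (-1,1) × (-1,1)`. -/
def Sq : Set (ℝ × ℝ) := Set.Ioo (-1 : ℝ) 1 ×ˢ Set.Ioo (-1 : ℝ) 1

/-- The real polynomial `u(ξ,η) = Σ_{i=0}^{W} Σ_{j=0}^{W} a_{i,j} ξ^i η^j`
of degree at most `W` in each variable separately. -/
def polyFun (W : ℕ) (a : ℕ → ℕ → ℝ) : ℝ × ℝ → ℝ := fun p =>
  ∑ i ∈ Finset.range (W + 1), ∑ j ∈ Finset.range (W + 1), a i j * p.1 ^ i * p.2 ^ j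

/-!
Write `u(ξ,η) = ∑ᵢ Aᵢ(ξ) Bᵢ(η)`. By Fubini every integral in the statement is a pairing
`∑ᵢⱼ α(Aᵢ,Aⱼ) β(Bᵢ,Bⱼ)` of two bilinear forms on `ℝ[X]`, namely `L²(-1,1)` pairings of
derivatives; by the Schur product theorem this pairing is monotone in each form for the
positive-semidefinite order.

Extend every polynomial from `[-1,1]` to `[-2,2]` by a `C¹` reflection across `±1`, multiplied by
a cutoff that vanishes to first order at `±2`. For the extended function `ũ` on `[-2,2]²`,
integrating by parts once in each variable leaves no boundary terms, so
`∫ ũ_ξη² = ∫ ũ_ξξ ũ_ηη ≤ ½ ∫ ũ_ξξ² + ½ ∫ ũ_ηη²`. It remains to bound the extension in one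
variable: on `L²` directly, and on `H²` together with the Landau-type inequality
`‖p'‖² ≤ C (‖p‖² + ‖p''‖²)` on `[-1,1]`, which follows from trace inequalities.
-/

open Polynomial intervalIntegral

section TensorPairing

variable {V V' W ι : Type*} [AddCommGroup V] [Module ℝ V] [AddCommGroup V'] [Module ℝ V']
  [AddCommGroup W] [Module ℝ W] {α α' : LinearMap.BilinForm ℝ V}
  {β β' : LinearMap.BilinForm ℝ V'}

lemma isPosSemidef_compl₁₂_self (hα : α.IsPosSemidef) (f : W →ₗ[ℝ] V) :
    LinearMap.BilinForm.IsPosSemidef (α.compl₁₂ f f) :=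
  ⟨⟨fun x y => hα.isSymm.eq (f x) (f y)⟩, ⟨fun x => hα.isNonneg.nonneg (f x)⟩⟩

lemma isPosSemidef_sub_of_le (hα : α.IsPosSemidef) (hα' : α'.IsPosSemidef)
    (h : ∀ v, α v v ≤ α' v v) : (α' - α).IsPosSemidef :=
  ⟨⟨fun x y => by simpa using congrArg₂ (· - ·) (hα'.isSymm.eq x y) (hα.isSymm.eq x y)⟩,
    ⟨fun v => by simpa using h v⟩⟩

lemma neg_two_mul_le_of_isPosSemidef (hα : α.IsPosSemidef) (u v : V) :
    -(2 * α u v) ≤ α u u + α v v := by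
  have h := hα.isNonneg.nonneg (u + v)
  simp only [map_add, LinearMap.add_apply, hα.isSymm.eq v u] at h
  linarith

lemma posSemidef_gram_of_isPosSemidef (hα : α.IsPosSemidef) (a : ι → V) :
    (Matrix.of fun i j => α (a i) (a j)).PosSemidef := by
  refine ⟨Matrix.IsHermitian.ext fun i j => by simpa using hα.isSymm.eq (a j) (a i), fun x => ?_⟩
  have h := hα.isNonneg.nonneg (x.sum fun i xi => xi • a i)
  simp only [Finsupp.sum, map_sum, map_smul, LinearMap.sum_apply, LinearMap.smul_apply,
    smul_eq_mul, Finset.mul_sum] at h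
  rw [Finset.sum_comm] at h
  simpa [Finsupp.sum, Finset.mul_sum, mul_comm, mul_left_comm] using h

variable [Fintype ι]

/-- The value of `α ⊗ β` on `(∑ᵢ aᵢ ⊗ bᵢ, ∑ⱼ a'ⱼ ⊗ b'ⱼ)`. -/
def tensorPairing (α : LinearMap.BilinForm ℝ V) (β : LinearMap.BilinForm ℝ V')
    (a a' : ι → V) (b b' : ι → V') : ℝ :=
  ∑ i, ∑ j, α (a i) (a' j) * β (b i) (b' j)

lemma tensorPairing_comm (a a' : ι → V) (b b' : ι → V') :
    tensorPairing α β a a' b b' = tensorPairing β α b b' a a' := by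
  simp only [tensorPairing, mul_comm]

lemma tensorPairing_add_left (a a' : ι → V) (b b' : ι → V') :
    tensorPairing (α + α') β a a' b b' =
      tensorPairing α β a a' b b' + tensorPairing α' β a a' b b' := by
  simp only [tensorPairing, LinearMap.add_apply, add_mul, Finset.sum_add_distrib]

lemma tensorPairing_smul_left (c : ℝ) (a a' : ι → V) (b b' : ι → V') :
    tensorPairing (c • α) β a a' b b' = c * tensorPairing α β a a' b b' := by
  simp only [tensorPairing, LinearMap.smul_apply, smul_eq_mul, Finset.mul_sum, mul_assoc]

lemma tensorPairing_smul_right (c : ℝ) (a a' : ι → V) (b b' : ι → V') :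
    tensorPairing α (c • β) a a' b b' = c * tensorPairing α β a a' b b' := by
  rw [tensorPairing_comm, tensorPairing_smul_left, tensorPairing_comm]

/-- The Schur product theorem, applied to the Gram matrices of `a` and `b`. -/
lemma tensorPairing_self_nonneg (hα : α.IsPosSemidef) (hβ : β.IsPosSemidef) (a : ι → V)
    (b : ι → V') : 0 ≤ tensorPairing α β a a b b := by
  simpa [tensorPairing, dotProduct, Matrix.mulVec, Finset.mul_sum] using
    ((posSemidef_gram_of_isPosSemidef hα a).hadamard
      (posSemidef_gram_of_isPosSemidef hβ b)).dotProduct_mulVec_nonneg (fun _ => 1)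

lemma tensorPairing_mono_left (h : (α' - α).IsPosSemidef) (hβ : β.IsPosSemidef) (a : ι → V)
    (b : ι → V') : tensorPairing α β a a b b ≤ tensorPairing α' β a a b b := by
  have := tensorPairing_self_nonneg h hβ a b
  simp only [tensorPairing, LinearMap.sub_apply, sub_mul, Finset.sum_sub_distrib] at this
  simpa only [tensorPairing, sub_nonneg] using this

lemma tensorPairing_mono_right (hα : α.IsPosSemidef) (h : (β' - β).IsPosSemidef) (a : ι → V)
    (b : ι → V') : tensorPairing α β a a b b ≤ tensorPairing α β' a a b b := by
  rw [tensorPairing_comm, tensorPairing_comm (β := β')]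
  exact tensorPairing_mono_left h hα b a

/-- Nonnegativity of `α ⊗ β` on `∑ aᵢ ⊗ bᵢ - ∑ a'ᵢ ⊗ b'ᵢ`. -/
lemma two_mul_tensorPairing_le (hα : α.IsPosSemidef) (hβ : β.IsPosSemidef)
    (a a' : ι → V) (b b' : ι → V') :
    2 * tensorPairing α β a a' b b' ≤
      tensorPairing α β a a b b + tensorPairing α β a' a' b' b' := by
  have h := tensorPairing_self_nonneg hα hβ (Sum.elim a (-a')) (Sum.elim b b')
  have hswap : tensorPairing α β a' a b' b = tensorPairing α β a a' b b' := by
    rw [tensorPairing, Finset.sum_comm]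
    simp only [tensorPairing, ← hα.isSymm.eq (a _) (a' _), ← hβ.isSymm.eq (b _) (b' _)]
  simp only [tensorPairing, Fintype.sum_sum_type, Sum.elim_inl, Sum.elim_inr, Pi.neg_apply,
    map_neg, LinearMap.neg_apply, neg_mul, Finset.sum_neg_distrib,
    Finset.sum_add_distrib] at h hswap ⊢
  linarith

end TensorPairing
lemma intervalIntegrable_eval_mul_eval (p q : ℝ[X]) (a b : ℝ) :
    IntervalIntegrable (fun x => p.eval x * q.eval x) volume a b :=
  (p.continuous.mul q.continuous).intervalIntegrable a b

noncomputable def l2Form (a b : ℝ) : LinearMap.BilinForm ℝ ℝ[X] :=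
  LinearMap.mk₂ ℝ (fun p q => ∫ x in a..b, p.eval x * q.eval x)
    (fun p p' q => by
      simp only [eval_add, add_mul]
      exact integral_add (intervalIntegrable_eval_mul_eval _ _ _ _)
        (intervalIntegrable_eval_mul_eval _ _ _ _))
    (fun c p q => by simp [mul_assoc])
    (fun p q q' => by
      simp only [eval_add, mul_add]
      exact integral_add (intervalIntegrable_eval_mul_eval _ _ _ _)
        (intervalIntegrable_eval_mul_eval _ _ _ _))
    (fun c p q => by simp [mul_left_comm])

lemma l2Form_apply (a b : ℝ) (p q : ℝ[X]) :
    l2Form a b p q = ∫ x in a..b, p.eval x * q.eval x := rfl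

lemma l2Form_isPosSemidef {a b : ℝ} (hab : a ≤ b) : (l2Form a b).IsPosSemidef :=
  ⟨⟨fun p q => by simp [l2Form_apply, mul_comm]⟩,
    ⟨fun p => integral_nonneg hab fun x _ => mul_self_nonneg _⟩⟩

lemma l2Form_self_nonneg {a b : ℝ} (hab : a ≤ b) (p : ℝ[X]) : 0 ≤ l2Form a b p p :=
  (l2Form_isPosSemidef hab).isNonneg.nonneg p

lemma l2Form_derivative_add (a b : ℝ) (p q : ℝ[X]) :
    l2Form a b (derivative p) (derivative q) + l2Form a b (derivative (derivative p)) q =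
      (derivative p).eval b * q.eval b - (derivative p).eval a * q.eval a := by
  rw [l2Form_apply, l2Form_apply, ← integral_add (intervalIntegrable_eval_mul_eval _ _ _ _)
    (intervalIntegrable_eval_mul_eval _ _ _ _)]
  refine integral_eq_sub_of_hasDerivAt (f := fun x => (derivative p).eval x * q.eval x)
    (fun x _ => ?_)
    ((intervalIntegrable_eval_mul_eval _ _ _ _).add (intervalIntegrable_eval_mul_eval _ _ _ _))
  rw [add_comm]
  exact ((derivative p).hasDerivAt x).fun_mul (q.hasDerivAt x)

lemma integral_eval_le_sum_l2Form {ι : Type*} [Fintype ι] {a b : ℝ} (hab : a ≤ b) (P : ℝ[X])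
    (c : ι → ℝ) (q : ι → ℝ[X]) (h : ∀ x ∈ Set.Icc a b, P.eval x ≤ ∑ k, c k * (q k).eval x ^ 2) :
    ∫ x in a..b, P.eval x ≤ ∑ k, c k * l2Form a b (q k) (q k) := by
  simp only [l2Form_apply, ← intervalIntegral.integral_const_mul]
  rw [← integral_finsetSum fun k _ => (intervalIntegrable_eval_mul_eval _ _ _ _).const_mul _]
  refine integral_mono_on hab (P.continuous.intervalIntegrable a b)
    (Continuous.intervalIntegrable (by fun_prop) a b) fun x hx => ?_
  simpa [sq] using h x hx

lemma l2Form_le_of_sq_le {ι : Type*} [Fintype ι] {a b : ℝ} (hab : a ≤ b) (p : ℝ[X])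
    (c : ι → ℝ) (q : ι → ℝ[X])
    (h : ∀ x ∈ Set.Icc a b, p.eval x ^ 2 ≤ ∑ k, c k * (q k).eval x ^ 2) :
    l2Form a b p p ≤ ∑ k, c k * l2Form a b (q k) (q k) := by
  simpa [l2Form_apply] using
    integral_eval_le_sum_l2Form hab (p * p) c q fun x hx => by simpa [sq] using h x hx

noncomputable def compNeg : ℝ[X] →ₗ[ℝ] ℝ[X] where
  toFun p := p.comp (-X)
  map_add' p q := add_comp
  map_smul' c p := by simp [smul_eq_C_mul, mul_comp]

@[simp] lemma eval_compNeg (p : ℝ[X]) (x : ℝ) : (compNeg p).eval x = p.eval (-x) := by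
  simp [compNeg]

lemma derivative_compNeg (p : ℝ[X]) : derivative (compNeg p) = -compNeg (derivative p) := by
  simp [compNeg, derivative_comp]

lemma l2Form_compNeg (a b : ℝ) (p q : ℝ[X]) :
    l2Form (-b) (-a) (compNeg p) (compNeg q) = l2Form a b p q := by
  simp only [l2Form_apply, eval_compNeg]
  rw [integral_comp_neg (fun x => p.eval x * q.eval x), neg_neg, neg_neg]

noncomputable def cutoff : ℝ[X] := (2 - X) ^ 2 * (2 * X - 1)

lemma derivative_cutoff : derivative cutoff = 6 * (X - 1) * (X - 2) := by
  simp only [cutoff, derivative_mul, derivative_pow, derivative_sub, derivative_X,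
    derivative_ofNat, derivative_one, Nat.cast_ofNat, map_ofNat]
  ring

lemma derivative_derivative_cutoff : derivative (derivative cutoff) = 12 * X - 18 := by
  rw [derivative_cutoff]
  simp only [derivative_mul, derivative_sub, derivative_X, derivative_ofNat, derivative_one]
  ring

lemma cutoff_bounds {x : ℝ} (hx : x ∈ Set.Icc (1 : ℝ) 2) :
    (cutoff.eval x) ^ 2 ≤ 1 ∧ ((derivative cutoff).eval x) ^ 2 ≤ 9 / 4 ∧
      ((derivative (derivative cutoff)).eval x) ^ 2 ≤ 36 := by
  obtain ⟨h1, h2⟩ := hx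
  rw [derivative_derivative_cutoff, derivative_cutoff]
  simp only [cutoff, eval_mul, eval_pow, eval_sub, eval_X, eval_ofNat, eval_one]
  refine ⟨?_, ?_, ?_⟩
  · have h0 : 0 ≤ (2 - x) ^ 2 * (2 * x - 1) := mul_nonneg (sq_nonneg _) (by linarith)
    have hle : (2 - x) ^ 2 * (2 * x - 1) ≤ 1 := by nlinarith [sq_nonneg (x - 1)]
    nlinarith
  · nlinarith [mul_nonneg (sub_nonneg.2 h1) (sub_nonneg.2 h2), sq_nonneg (2 * x - 3)]
  · nlinarith

noncomputable def reflectComb (a b : ℝ) (r : ℝ[X]) : ℝ[X] :=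
  C a * r.comp (2 - X) + C b * r.comp (3 - 2 * X)

lemma eval_reflectComb (a b : ℝ) (r : ℝ[X]) (x : ℝ) :
    (reflectComb a b r).eval x = a * r.eval (2 - x) + b * r.eval (3 - 2 * x) := by
  simp [reflectComb]

lemma derivative_reflectComb (a b : ℝ) (r : ℝ[X]) :
    derivative (reflectComb a b r) = reflectComb (-a) (-2 * b) (derivative r) := by
  simp only [reflectComb, derivative_add, derivative_mul, derivative_C, derivative_comp,
    derivative_sub, derivative_X, derivative_ofNat, map_neg, map_mul, map_ofNat]
  ring

lemma l2Form_one_two_comp_le (r : ℝ[X]) :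
    l2Form 1 2 (r.comp (2 - X)) (r.comp (2 - X)) ≤ l2Form (-1) 1 r r := by
  have h : l2Form 1 2 (r.comp (2 - X)) (r.comp (2 - X)) = l2Form 0 1 r r := by
    simp only [l2Form_apply, eval_comp, eval_sub, eval_X, eval_ofNat]
    rw [integral_comp_sub_left (fun x => r.eval x * r.eval x)]
    norm_num
  rw [h, l2Form_apply, l2Form_apply, ← integral_add_adjacent_intervals
    (intervalIntegrable_eval_mul_eval r r (-1) 0) (intervalIntegrable_eval_mul_eval r r 0 1)]
  linarith [l2Form_apply (-1) 0 r r ▸ l2Form_self_nonneg (by norm_num : (-1 : ℝ) ≤ 0) r]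

lemma l2Form_one_two_comp_eq (r : ℝ[X]) :
    l2Form 1 2 (r.comp (3 - 2 * X)) (r.comp (3 - 2 * X)) = l2Form (-1) 1 r r / 2 := by
  simp only [l2Form_apply, eval_comp, eval_sub, eval_mul, eval_X, eval_ofNat]
  have := integral_comp_mul_add (a := 1) (b := 2) (fun x => r.eval x * r.eval x)
    (by norm_num : (-2 : ℝ) ≠ 0) 3
  simp only [show ∀ x : ℝ, -2 * x + 3 = 3 - 2 * x from fun x => by ring] at this
  rw [this, integral_symm]
  norm_num
  ring

lemma l2Form_reflectComb_le (a b : ℝ) (r : ℝ[X]) :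
    l2Form 1 2 (reflectComb a b r) (reflectComb a b r) ≤
      (2 * a ^ 2 + b ^ 2) * l2Form (-1) 1 r r := by
  have h := l2Form_le_of_sq_le (by norm_num : (1 : ℝ) ≤ 2) (reflectComb a b r)
    ![2 * a ^ 2, 2 * b ^ 2] ![r.comp (2 - X), r.comp (3 - 2 * X)] fun x _ => by
      simp only [Fin.sum_univ_two, Matrix.cons_val_zero, Matrix.cons_val_one, eval_reflectComb,
        eval_comp, eval_sub, eval_mul, eval_X, eval_ofNat]
      nlinarith [sq_nonneg (a * r.eval (2 - x) - b * r.eval (3 - 2 * x))]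
  simp only [Fin.sum_univ_two, Matrix.cons_val_zero, Matrix.cons_val_one,
    l2Form_one_two_comp_eq] at h
  nlinarith [l2Form_one_two_comp_le r, sq_nonneg a]

/-- `3 p(2-x) - 2 p(3-2x)` agrees with `p` to first order at `x = 1`, and the cutoff satisfies
`χ(1) = 1`, `χ'(1) = χ(2) = χ'(2) = 0`. -/
noncomputable def extendRight : ℝ[X] →ₗ[ℝ] ℝ[X] where
  toFun p := reflectComb 3 (-2) p * cutoff
  map_add' p q := by simp only [reflectComb, add_comp]; ring
  map_smul' c p := by simp only [reflectComb, smul_eq_C_mul, mul_comp, C_comp]; simp; ring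

lemma extendRight_apply (p : ℝ[X]) : extendRight p = reflectComb 3 (-2) p * cutoff := rfl

lemma extendRight_boundary (p : ℝ[X]) :
    (extendRight p).eval 1 = p.eval 1 ∧
      (derivative (extendRight p)).eval 1 = (derivative p).eval 1 ∧
      (extendRight p).eval 2 = 0 ∧ (derivative (extendRight p)).eval 2 = 0 := by
  simp only [extendRight_apply, derivative_mul, derivative_reflectComb, derivative_cutoff]
  simp only [cutoff, eval_add, eval_mul, eval_reflectComb, eval_pow, eval_sub, eval_X, eval_ofNat,
    eval_one]
  norm_num
  exact ⟨by ring, by ring⟩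

lemma sq_eval_derivative_derivative_mul_cutoff_le (g : ℝ[X]) {x : ℝ} (hx : x ∈ Set.Icc (1 : ℝ) 2) :
    ((derivative (derivative (g * cutoff))).eval x) ^ 2 ≤
      3 * ((derivative (derivative g)).eval x) ^ 2 + 27 * ((derivative g).eval x) ^ 2 +
        108 * (g.eval x) ^ 2 := by
  obtain ⟨h0, h1, h2⟩ := cutoff_bounds hx
  -- `(gχ)'' = g''χ + 2g'χ' + gχ''` and `(s + t + u)² ≤ 3 (s² + t² + u²)`
  simp only [derivative_mul, derivative_add, eval_add, eval_mul]
  set u := (derivative (derivative g)).eval x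
  set v := (derivative g).eval x
  set w := g.eval x
  set c₀ := cutoff.eval x
  set c₁ := (derivative cutoff).eval x
  set c₂ := (derivative (derivative cutoff)).eval x
  nlinarith [mul_le_mul_of_nonneg_left h0 (sq_nonneg u), mul_le_mul_of_nonneg_left h1 (sq_nonneg v),
    mul_le_mul_of_nonneg_left h2 (sq_nonneg w), sq_nonneg (u * c₀ - 2 * v * c₁),
    sq_nonneg (u * c₀ - w * c₂), sq_nonneg (2 * v * c₁ - w * c₂)]

lemma l2Form_extendRight_le (p : ℝ[X]) :
    l2Form 1 2 (extendRight p) (extendRight p) ≤ 22 * l2Form (-1) 1 p p := by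
  have h := l2Form_le_of_sq_le (by norm_num : (1 : ℝ) ≤ 2) (extendRight p) ![1]
    ![reflectComb 3 (-2) p] fun x hx => by
      simp only [Fin.sum_univ_one, Matrix.cons_val_zero, one_mul, extendRight_apply, eval_mul]
      nlinarith [(cutoff_bounds hx).1, sq_nonneg ((reflectComb 3 (-2) p).eval x)]
  simp only [Fin.sum_univ_one, Matrix.cons_val_zero, one_mul] at h
  linarith [l2Form_reflectComb_le 3 (-2) p]

lemma l2Form_derivative_derivative_extendRight_le (p : ℝ[X]) :
    l2Form 1 2 (derivative (derivative (extendRight p))) (derivative (derivative (extendRight p))) ≤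
      2376 * l2Form (-1) 1 p p + 918 * l2Form (-1) 1 (derivative p) (derivative p) +
        246 * l2Form (-1) 1 (derivative (derivative p)) (derivative (derivative p)) := by
  have d1 : derivative (reflectComb 3 (-2) p) = reflectComb (-3) 4 (derivative p) := by
    rw [derivative_reflectComb]; norm_num
  have d2 : derivative (reflectComb (-3) 4 (derivative p)) =
      reflectComb 3 (-8) (derivative (derivative p)) := by
    rw [derivative_reflectComb]; norm_num
  have h := l2Form_le_of_sq_le (by norm_num : (1 : ℝ) ≤ 2)
    (derivative (derivative (extendRight p))) ![3, 27, 108]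
    ![reflectComb 3 (-8) (derivative (derivative p)), reflectComb (-3) 4 (derivative p),
      reflectComb 3 (-2) p] fun x hx => by
      have := sq_eval_derivative_derivative_mul_cutoff_le (reflectComb 3 (-2) p) hx
      rw [d1, d2] at this
      simpa [Fin.sum_univ_three, extendRight_apply] using this
  simp only [Fin.sum_univ_three, Matrix.cons_val_zero, Matrix.cons_val_one,
    Matrix.cons_val_two, Matrix.tail_cons, Matrix.head_cons] at h
  have h0 := l2Form_reflectComb_le 3 (-2) p
  have h1 := l2Form_reflectComb_le (-3) 4 (derivative p)
  have h2 := l2Form_reflectComb_le 3 (-8) (derivative (derivative p))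
  norm_num at h0 h1 h2
  linarith

lemma l2Form_compNeg_self (p : ℝ[X]) :
    l2Form (-1) 1 (compNeg p) (compNeg p) = l2Form (-1) 1 p p := by
  simpa using l2Form_compNeg (-1) 1 p p

lemma l2Form_derivative_compNeg_self (p : ℝ[X]) :
    l2Form (-1) 1 (derivative (compNeg p)) (derivative (compNeg p)) =
      l2Form (-1) 1 (derivative p) (derivative p) := by
  simp [derivative_compNeg, l2Form_compNeg_self]

lemma mul_sq_eval_one_le (f : ℝ[X]) (ε : ℝ) :
    ε * f.eval 1 ^ 2 ≤
      (ε / 2 + 1) * l2Form (-1) 1 f f + ε ^ 2 * l2Form (-1) 1 (derivative f) (derivative f) := by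
  set Φ : ℝ[X] := C (ε / 2) * (1 + X) * f ^ 2
  have hΦ : ∫ x in (-1 : ℝ)..1, (derivative Φ).eval x = ε * f.eval 1 ^ 2 := by
    rw [integral_eq_sub_of_hasDerivAt (fun x _ => Φ.hasDerivAt x)
      ((derivative Φ).continuous.intervalIntegrable _ _)]
    simp only [Φ, eval_mul, eval_C, eval_add, eval_one, eval_X, eval_pow]
    ring
  rw [← hΦ]
  simpa [Fin.sum_univ_two] using integral_eval_le_sum_l2Form (by norm_num : (-1 : ℝ) ≤ 1)
    (derivative Φ) ![ε / 2 + 1, ε ^ 2] ![f, derivative f] fun x hx => by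
      obtain ⟨h1, h2⟩ := hx
      simp only [Φ, Fin.sum_univ_two, Matrix.cons_val_zero, Matrix.cons_val_one,
        derivative_mul, derivative_C, derivative_add, derivative_one, derivative_X,
        derivative_pow, eval_add, eval_mul, eval_C, eval_one, eval_X, eval_pow, eval_zero,
        Nat.cast_ofNat, pow_one, Nat.add_one_sub_one]
      nlinarith [mul_nonneg (by linarith : 0 ≤ 1 + x)
          (sq_nonneg (f.eval x - ε * (derivative f).eval x)),
        mul_nonneg (by linarith : 0 ≤ 1 - x) (add_nonneg (sq_nonneg (f.eval x))
          (sq_nonneg (ε * (derivative f).eval x)))]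

lemma mul_sq_eval_neg_one_le (f : ℝ[X]) (ε : ℝ) :
    ε * f.eval (-1) ^ 2 ≤
      (ε / 2 + 1) * l2Form (-1) 1 f f + ε ^ 2 * l2Form (-1) 1 (derivative f) (derivative f) := by
  simpa [l2Form_compNeg_self, l2Form_derivative_compNeg_self] using mul_sq_eval_one_le (compNeg f) ε

lemma l2Form_derivative_le (p : ℝ[X]) :
    l2Form (-1) 1 (derivative p) (derivative p) ≤
      178 * l2Form (-1) 1 p p +
        2 * l2Form (-1) 1 (derivative (derivative p)) (derivative (derivative p)) := by
  have hparts := l2Form_derivative_add (-1) 1 p p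
  have hcross := neg_two_mul_le_of_isPosSemidef (l2Form_isPosSemidef (by norm_num : (-1 : ℝ) ≤ 1))
    (derivative (derivative p)) p
  have t₁ := mul_sq_eval_one_le p (1 / 16)
  have t₂ := mul_sq_eval_neg_one_le p (1 / 16)
  have t₃ := mul_sq_eval_one_le (derivative p) 1
  have t₄ := mul_sq_eval_neg_one_le (derivative p) 1
  nlinarith [sq_nonneg (4 * p.eval 1 - (derivative p).eval 1),
    sq_nonneg (4 * p.eval (-1) + (derivative p).eval (-1))]

noncomputable def extendLeft : ℝ[X] →ₗ[ℝ] ℝ[X] := compNeg ∘ₗ extendRight ∘ₗ compNeg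

lemma extendLeft_boundary (p : ℝ[X]) :
    (extendLeft p).eval (-1) = p.eval (-1) ∧
      (derivative (extendLeft p)).eval (-1) = (derivative p).eval (-1) ∧
      (extendLeft p).eval (-2) = 0 ∧ (derivative (extendLeft p)).eval (-2) = 0 := by
  obtain ⟨h₁, h₁', h₂, h₂'⟩ := extendRight_boundary (compNeg p)
  simp only [extendLeft, LinearMap.comp_apply, derivative_compNeg, eval_compNeg, eval_neg,
    neg_neg] at h₁ h₁' h₂ h₂' ⊢
  simp [h₁, h₁', h₂, h₂']

lemma l2Form_extendLeft (p : ℝ[X]) :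
    l2Form (-2) (-1) (extendLeft p) (extendLeft p) =
      l2Form 1 2 (extendRight (compNeg p)) (extendRight (compNeg p)) :=
  l2Form_compNeg 1 2 _ _

lemma l2Form_derivative_derivative_extendLeft (p : ℝ[X]) :
    l2Form (-2) (-1) (derivative (derivative (extendLeft p)))
        (derivative (derivative (extendLeft p))) =
      l2Form 1 2 (derivative (derivative (extendRight (compNeg p))))
        (derivative (derivative (extendRight (compNeg p)))) := by
  simp only [extendLeft, LinearMap.comp_apply, derivative_compNeg, map_neg, neg_neg]
  exact l2Form_compNeg 1 2 _ _

/-- A triple `(f₋, f₀, f₊)` encodes the piecewise polynomial equal to `f₋` on `[-2,-1]`, `f₀` on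
`[-1,1]` and `f₊` on `[1,2]`; `piecewiseL2` is its `L²(-2,2)` pairing. -/
noncomputable def piecewiseL2 : LinearMap.BilinForm ℝ (ℝ[X] × ℝ[X] × ℝ[X]) :=
  (l2Form (-2) (-1)).compl₁₂ (LinearMap.fst ℝ _ _) (LinearMap.fst ℝ _ _) +
    (l2Form (-1) 1).compl₁₂ (LinearMap.fst ℝ _ _ ∘ₗ LinearMap.snd ℝ _ _)
      (LinearMap.fst ℝ _ _ ∘ₗ LinearMap.snd ℝ _ _) +
    (l2Form 1 2).compl₁₂ (LinearMap.snd ℝ _ _ ∘ₗ LinearMap.snd ℝ _ _)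
      (LinearMap.snd ℝ _ _ ∘ₗ LinearMap.snd ℝ _ _)

lemma piecewiseL2_apply (u v : ℝ[X] × ℝ[X] × ℝ[X]) :
    piecewiseL2 u v =
      l2Form (-2) (-1) u.1 v.1 + l2Form (-1) 1 u.2.1 v.2.1 + l2Form 1 2 u.2.2 v.2.2 :=
  rfl

lemma piecewiseL2_isPosSemidef : piecewiseL2.IsPosSemidef :=
  ⟨⟨fun u v => by simp [piecewiseL2_apply, l2Form_apply, mul_comm]⟩, ⟨fun u => by
    rw [piecewiseL2_apply]
    linarith [l2Form_self_nonneg (by norm_num : (-2 : ℝ) ≤ -1) u.1,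
      l2Form_self_nonneg (by norm_num : (-1 : ℝ) ≤ 1) u.2.1,
      l2Form_self_nonneg (by norm_num : (1 : ℝ) ≤ 2) u.2.2]⟩⟩

noncomputable def piecewiseDeriv : ℝ[X] × ℝ[X] × ℝ[X] →ₗ[ℝ] ℝ[X] × ℝ[X] × ℝ[X] :=
  derivative.prodMap (derivative.prodMap derivative)

lemma piecewiseDeriv_apply (u : ℝ[X] × ℝ[X] × ℝ[X]) :
    piecewiseDeriv u = (derivative u.1, derivative u.2.1, derivative u.2.2) :=
  rfl

noncomputable def extension : ℝ[X] →ₗ[ℝ] ℝ[X] × ℝ[X] × ℝ[X] :=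
  extendLeft.prod (LinearMap.id.prod extendRight)

lemma extension_apply (p : ℝ[X]) : extension p = (extendLeft p, p, extendRight p) :=
  rfl

/-- The extension is `C¹` across `±1` and vanishes to first order at `±2`, so integrating by parts
on `[-2,2]` leaves no boundary terms. -/
lemma piecewiseL2_piecewiseDeriv_extension (p q : ℝ[X]) :
    piecewiseL2 (piecewiseDeriv (extension p)) (piecewiseDeriv (extension q)) =
      -piecewiseL2 (piecewiseDeriv (piecewiseDeriv (extension p))) (extension q) := by
  obtain ⟨hqL₁, -, hqL₂, -⟩ := extendLeft_boundary q
  obtain ⟨-, hpL₁, -, hpL₂⟩ := extendLeft_boundary p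
  obtain ⟨hqR₁, -, hqR₂, -⟩ := extendRight_boundary q
  obtain ⟨-, hpR₁, -, hpR₂⟩ := extendRight_boundary p
  have hL := l2Form_derivative_add (-2) (-1) (extendLeft p) (extendLeft q)
  have hM := l2Form_derivative_add (-1) 1 p q
  have hR := l2Form_derivative_add 1 2 (extendRight p) (extendRight q)
  rw [hqL₁, hpL₁, hqL₂, hpL₂] at hL
  rw [hqR₁, hpR₁, hqR₂, hpR₂] at hR
  simp only [piecewiseL2_apply, piecewiseDeriv_apply, extension_apply]
  linarith

noncomputable def derivForm (k : ℕ) : LinearMap.BilinForm ℝ ℝ[X] :=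
  (l2Form (-1) 1).compl₁₂ (derivative ^ k) (derivative ^ k)

lemma derivForm_apply (k : ℕ) (p q : ℝ[X]) :
    derivForm k p q = l2Form (-1) 1 (derivative^[k] p) (derivative^[k] q) := by
  simp [derivForm, Module.End.pow_apply]

lemma derivForm_isPosSemidef (k : ℕ) : (derivForm k).IsPosSemidef :=
  isPosSemidef_compl₁₂_self (l2Form_isPosSemidef (by norm_num)) _

noncomputable def extensionForm (k : ℕ) : LinearMap.BilinForm ℝ ℝ[X] :=
  piecewiseL2.compl₁₂ ((piecewiseDeriv ^ k) ∘ₗ extension) ((piecewiseDeriv ^ k) ∘ₗ extension)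

lemma extensionForm_apply (k : ℕ) (p q : ℝ[X]) :
    extensionForm k p q =
      piecewiseL2 (piecewiseDeriv^[k] (extension p)) (piecewiseDeriv^[k] (extension q)) := by
  simp [extensionForm, Module.End.pow_apply]

lemma extensionForm_isPosSemidef (k : ℕ) : (extensionForm k).IsPosSemidef :=
  isPosSemidef_compl₁₂_self piecewiseL2_isPosSemidef _

lemma derivForm_one_le_extensionForm_one (p : ℝ[X]) :
    derivForm 1 p p ≤ extensionForm 1 p p := by
  simp only [derivForm_apply, extensionForm_apply, Function.iterate_one, piecewiseL2_apply,
    piecewiseDeriv_apply, extension_apply]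
  linarith [l2Form_self_nonneg (by norm_num : (-2 : ℝ) ≤ -1) (derivative (extendLeft p)),
    l2Form_self_nonneg (by norm_num : (1 : ℝ) ≤ 2) (derivative (extendRight p))]

lemma extensionForm_zero_le (p : ℝ[X]) : extensionForm 0 p p ≤ 45 * derivForm 0 p p := by
  simp only [derivForm_apply, extensionForm_apply,
    Function.iterate_zero, id_eq, piecewiseL2_apply, extension_apply, l2Form_extendLeft]
  linarith [l2Form_extendRight_le p, l2Form_extendRight_le (compNeg p), l2Form_compNeg_self p]

lemma extensionForm_two_le (p : ℝ[X]) :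
    extensionForm 2 p p ≤ 400000 * (derivForm 0 p p + derivForm 2 p p) := by
  simp only [derivForm_apply, extensionForm_apply, Function.iterate_succ, Function.comp_apply, Function.iterate_zero,
    id_eq, piecewiseL2_apply, piecewiseDeriv_apply, extension_apply,
    l2Form_derivative_derivative_extendLeft]
  have h₂ : l2Form (-1) 1 (derivative (derivative (compNeg p)))
      (derivative (derivative (compNeg p))) =
      l2Form (-1) 1 (derivative (derivative p)) (derivative (derivative p)) := by
    simp [derivative_compNeg, l2Form_compNeg_self]
  linarith [l2Form_derivative_derivative_extendRight_le p,
    l2Form_derivative_derivative_extendRight_le (compNeg p), l2Form_compNeg_self p,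
    l2Form_derivative_compNeg_self p, l2Form_derivative_le p,
    l2Form_self_nonneg (by norm_num : (-1 : ℝ) ≤ 1) p,
    l2Form_self_nonneg (by norm_num : (-1 : ℝ) ≤ 1) (derivative (derivative p))]

section Interpolation

variable {ι : Type*} [Fintype ι] (A B : ι → ℝ[X])

lemma two_mul_tensorPairing_extensionForm_one_le :
    2 * tensorPairing (extensionForm 1) (extensionForm 1) A A B B ≤
      tensorPairing (extensionForm 2) (extensionForm 0) A A B B +
        tensorPairing (extensionForm 0) (extensionForm 2) A A B B := by
  have hparts : tensorPairing (extensionForm 1) (extensionForm 1) A A B B =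
      tensorPairing piecewiseL2 piecewiseL2 (fun i => piecewiseDeriv^[2] (extension (A i)))
        (fun i => extension (A i)) (fun i => extension (B i))
        (fun i => piecewiseDeriv^[2] (extension (B i))) := by
    refine Finset.sum_congr rfl fun i _ => Finset.sum_congr rfl fun j _ => ?_
    simp only [extensionForm_apply, Function.iterate_succ,
      Function.comp_apply, Function.iterate_zero, id_eq]
    rw [piecewiseL2_piecewiseDeriv_extension,
      piecewiseL2_isPosSemidef.isSymm.eq (piecewiseDeriv (extension (B i))),
      piecewiseL2_piecewiseDeriv_extension,
      piecewiseL2_isPosSemidef.isSymm.eq (piecewiseDeriv (piecewiseDeriv (extension (B j))))]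
    ring
  rw [hparts]
  exact two_mul_tensorPairing_le piecewiseL2_isPosSemidef piecewiseL2_isPosSemidef _ _ _ _

lemma tensorPairing_extensionForm_two_zero_le :
    tensorPairing (extensionForm 2) (extensionForm 0) A A B B ≤
      18000000 * (tensorPairing (derivForm 2) (derivForm 0) A A B B +
        tensorPairing (derivForm 0) (derivForm 0) A A B B) := by
  have h₀ : ((45 : ℝ) • derivForm 0 - extensionForm 0).IsPosSemidef :=
    isPosSemidef_sub_of_le (extensionForm_isPosSemidef 0) ((derivForm_isPosSemidef 0).smul
      (by norm_num)) fun p => by simpa using extensionForm_zero_le p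
  have h₂ : ((400000 : ℝ) • (derivForm 0 + derivForm 2) - extensionForm 2).IsPosSemidef :=
    isPosSemidef_sub_of_le (extensionForm_isPosSemidef 2)
      (((derivForm_isPosSemidef 0).add (derivForm_isPosSemidef 2)).smul (by norm_num))
      fun p => by simpa [mul_add] using extensionForm_two_le p
  calc tensorPairing (extensionForm 2) (extensionForm 0) A A B B
      ≤ tensorPairing (extensionForm 2) ((45 : ℝ) • derivForm 0) A A B B :=
        tensorPairing_mono_right (extensionForm_isPosSemidef 2) h₀ A B
    _ ≤ 45 * tensorPairing ((400000 : ℝ) • (derivForm 0 + derivForm 2)) (derivForm 0) A A B B := by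
        rw [tensorPairing_smul_right]
        exact mul_le_mul_of_nonneg_left
          (tensorPairing_mono_left h₂ (derivForm_isPosSemidef 0) A B) (by norm_num)
    _ = _ := by rw [tensorPairing_smul_left, tensorPairing_add_left]; ring

theorem tensorPairing_derivForm_one_le :
    tensorPairing (derivForm 1) (derivForm 1) A A B B ≤
      18000000 * (tensorPairing (derivForm 2) (derivForm 0) A A B B +
        tensorPairing (derivForm 0) (derivForm 2) A A B B +
          tensorPairing (derivForm 0) (derivForm 0) A A B B) := by
  have h₁ : (extensionForm 1 - derivForm 1).IsPosSemidef :=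
    isPosSemidef_sub_of_le (derivForm_isPosSemidef 1) (extensionForm_isPosSemidef 1)
      derivForm_one_le_extensionForm_one
  have hextend : tensorPairing (derivForm 1) (derivForm 1) A A B B ≤
      tensorPairing (extensionForm 1) (extensionForm 1) A A B B :=
    (tensorPairing_mono_left h₁ (derivForm_isPosSemidef 1) A B).trans
      (tensorPairing_mono_right (extensionForm_isPosSemidef 1) h₁ A B)
  have hAB := tensorPairing_extensionForm_two_zero_le A B
  have hBA := tensorPairing_extensionForm_two_zero_le B A
  rw [tensorPairing_comm (α := extensionForm 2), tensorPairing_comm (α := derivForm 2),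
    tensorPairing_comm (α := derivForm 0) (β := derivForm 0)] at hBA
  linarith [two_mul_tensorPairing_extensionForm_one_le A B,
    tensorPairing_self_nonneg (derivForm_isPosSemidef 2) (derivForm_isPosSemidef 0) A B,
    tensorPairing_self_nonneg (derivForm_isPosSemidef 0) (derivForm_isPosSemidef 2) A B]

end Interpolation

lemma iteratedDeriv_sum_mul_eval {ι : Type*} (s : Finset ι) (c : ι → ℝ) (A : ι → ℝ[X]) (n : ℕ) :
    iteratedDeriv n (fun x => ∑ i ∈ s, c i * (A i).eval x) =
      fun x => ∑ i ∈ s, c i * (derivative^[n] (A i)).eval x := by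
  induction n with
  | zero => simp
  | succ n ih =>
    rw [iteratedDeriv_succ, ih]
    funext x
    simp only [Function.iterate_succ_apply']
    exact (HasDerivAt.fun_sum fun i _ =>
      ((derivative^[n] (A i)).hasDerivAt x).const_mul (c i)).deriv

lemma pder_sum_mul_eval {ι : Type*} (s : Finset ι) (A B : ι → ℝ[X]) (m n : ℕ) (p : ℝ × ℝ) :
    pder m n (fun q => ∑ i ∈ s, (A i).eval q.1 * (B i).eval q.2) p =
      ∑ i ∈ s, (derivative^[m] (A i)).eval p.1 * (derivative^[n] (B i)).eval p.2 := by
  simp only [pder, iteratedDeriv_sum_mul_eval]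
  simp only [mul_comm _ ((derivative^[n] _).eval _)]
  rw [iteratedDeriv_sum_mul_eval]

lemma pder_zero_zero (U : ℝ × ℝ → ℝ) (p : ℝ × ℝ) : pder 0 0 U p = U p := by
  simp [pder]

lemma polyFun_eq_sum_mul_eval (W : ℕ) (a : ℕ → ℕ → ℝ) :
    polyFun W a = fun p => ∑ i : Fin (W + 1), (X ^ (i : ℕ) : ℝ[X]).eval p.1 *
      (∑ j ∈ Finset.range (W + 1), C (a i j) * X ^ j).eval p.2 := by
  funext p
  simp only [polyFun, eval_pow, eval_X, eval_finsetSum, eval_mul, eval_C, Finset.mul_sum]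
  rw [← Fin.sum_univ_eq_sum_range (fun i => ∑ j ∈ Finset.range (W + 1), a i j * p.1 ^ i * p.2 ^ j)]
  exact Finset.sum_congr rfl fun i _ => Finset.sum_congr rfl fun j _ => by ring

lemma Continuous.integrableOn_Ioo_prod_Ioo {f : ℝ × ℝ → ℝ} (hf : Continuous f) (a b c d : ℝ) :
    IntegrableOn f (Set.Ioo a b ×ˢ Set.Ioo c d) :=
  (hf.continuousOn.integrableOn_compact (isCompact_Icc.prod isCompact_Icc)).mono_set
    (Set.prod_mono Set.Ioo_subset_Icc_self Set.Ioo_subset_Icc_self)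

lemma l2Form_eq_setIntegral {a b : ℝ} (hab : a ≤ b) (p q : ℝ[X]) :
    l2Form a b p q = ∫ x in Set.Ioo a b, p.eval x * q.eval x := by
  rw [l2Form_apply, integral_of_le hab, integral_Ioc_eq_integral_Ioo]

lemma setIntegral_sum_mul_eval_sq {ι : Type*} [Fintype ι] {a b c d : ℝ} (hab : a ≤ b)
    (hcd : c ≤ d) (A B : ι → ℝ[X]) :
    ∫ p in Set.Ioo a b ×ˢ Set.Ioo c d, (∑ i, (A i).eval p.1 * (B i).eval p.2) ^ 2 =
      tensorPairing (l2Form a b) (l2Form c d) A A B B := by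
  have hsq : ∀ p : ℝ × ℝ, (∑ i, (A i).eval p.1 * (B i).eval p.2) ^ 2 =
      ∑ i, ∑ j, (A i).eval p.1 * (A j).eval p.1 * ((B i).eval p.2 * (B j).eval p.2) := fun p => by
    rw [sq, Finset.sum_mul_sum]
    exact Finset.sum_congr rfl fun i _ => Finset.sum_congr rfl fun j _ => by ring
  simp_rw [hsq]
  rw [integral_finsetSum _ fun i _ => integrable_finsetSum _ fun j _ =>
    Continuous.integrableOn_Ioo_prod_Ioo (by fun_prop) a b c d]
  refine Finset.sum_congr rfl fun i _ => ?_
  rw [integral_finsetSum _ fun j _ => Continuous.integrableOn_Ioo_prod_Ioo (by fun_prop) a b c d]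
  refine Finset.sum_congr rfl fun j _ => ?_
  rw [Measure.volume_eq_prod, setIntegral_prod_mul (fun x => (A i).eval x * (A j).eval x)
    (fun y => (B i).eval y * (B j).eval y), l2Form_eq_setIntegral hab, l2Form_eq_setIntegral hcd]

section SeparatedSum

variable {ι : Type*} [Fintype ι] (A B : ι → ℝ[X]) (m n : ℕ)

lemma integrableOn_sq_pder_sum :
    IntegrableOn (fun p => pder m n (fun q => ∑ i, (A i).eval q.1 * (B i).eval q.2) p ^ 2) Sq := by
  simp only [pder_sum_mul_eval]
  exact Continuous.integrableOn_Ioo_prod_Ioo (by fun_prop) _ _ _ _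

lemma setIntegral_sq_pder_sum :
    ∫ p in Sq, pder m n (fun q => ∑ i, (A i).eval q.1 * (B i).eval q.2) p ^ 2 =
      tensorPairing (derivForm m) (derivForm n) A A B B := by
  simp only [pder_sum_mul_eval]
  rw [Sq, setIntegral_sum_mul_eval_sq (by norm_num) (by norm_num)]
  simp only [tensorPairing, derivForm_apply]

end SeparatedSum

theorem stmt_12 :
    ∃ K > (0 : ℝ), ∀ (W : ℕ) (a : ℕ → ℕ → ℝ),
      ∫ p in Sq, (pder 1 1 (polyFun W a) p) ^ 2 ≤
        (K / 2) * ∫ p in Sq, ((pder 2 0 (polyFun W a) p) ^ 2 + (pder 0 2 (polyFun W a) p) ^ 2 +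
          (polyFun W a p) ^ 2) := by
  refine ⟨36000000, by norm_num, fun W a => ?_⟩
  simp_rw [← pder_zero_zero (polyFun W a), polyFun_eq_sum_mul_eval]
  rw [integral_add ((integrableOn_sq_pder_sum _ _ _ _).fun_add (integrableOn_sq_pder_sum _ _ _ _))
      (integrableOn_sq_pder_sum _ _ _ _),
    integral_add (integrableOn_sq_pder_sum _ _ _ _) (integrableOn_sq_pder_sum _ _ _ _)]
  simp only [setIntegral_sq_pder_sum]
  linarith [tensorPairing_derivForm_one_le (fun i : Fin (W + 1) => (X ^ (i : ℕ) : ℝ[X]))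
    (fun i => ∑ j ∈ Finset.range (W + 1), C (a i j) * X ^ j)]
end

section
/- (Diagonalization of the quadratic form C in a tensor-product basis.) Let W ∈ ℕ and let φ₀,…,φ_W : ℝ → ℝ be polynomials and μ₀,…,μ_W real numbers satisfying, for all 0 ≤ i, j ≤ W: ∫_{-1}^{1} φ_i(ξ) φ_j(ξ) dξ = δ_{ij} and ∫_{-1}^{1} (φ_i''''(ξ) φ_j''''(ξ) + φ_i'''(ξ) φ_j'''(ξ) + φ_i''(ξ) φ_j''(ξ) + φ_i'(ξ) φ_j'(ξ)) dξ = μ_i δ_{ij}. Define ψ_{i,j}(ξ,η) = φ_i(ξ) φ_j(η). Then for all 0 ≤ i, j, k, l ≤ W, the bilinear form C̃(ψ_{i,j}, ψ_{k,l}) = (μ_i + μ_j + 1) δ_{ik} δ_{jl}, where C̃(f,g) = ∫_S (∂⁴_ξ f · ∂⁴_ξ g + ∂⁴_η f · ∂⁴_η g + ∂³_ξ f · ∂³_ξ g + ∂³_η f · ∂³_η g + ∂²_ξ f · ∂²_ξ g + ∂²_η f · ∂²_η g + ∂_ξ f · ∂_ξ g + ∂_η f · ∂_η g + f·g) dξ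 dη. -/
open MeasureTheory

/-- The bilinear form
`C̃(f,g) = ∫_S (∂⁴_ξ f ∂⁴_ξ g + ∂⁴_η f ∂⁴_η g + ∂³_ξ f ∂³_ξ g + ∂³_η f ∂³_η g
  + ∂²_ξ f ∂²_ξ g + ∂²_η f ∂²_η g + ∂_ξ f ∂_ξ g + ∂_η f ∂_η g + f g) dξ dη`. -/
noncomputable def Ctilde (f g : ℝ × ℝ → ℝ) : ℝ :=
  ∫ p in Sq, (pder 4 0 f p * pder 4 0 g p + pder 0 4 f p * pder 0 4 g p +
    pder 3 0 f p * pder 3 0 g p + pder 0 3 f p * pder 0 3 g p +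
    pder 2 0 f p * pder 2 0 g p + pder 0 2 f p * pder 0 2 g p +
    pder 1 0 f p * pder 1 0 g p + pder 0 1 f p * pder 0 1 g p + f p * g p)

/-!
For tensor products the integrand of `C̃(u ⊗ v, w ⊗ z)` is
`e(u,w)(ξ) (vz)(η) + (uw)(ξ) e(v,z)(η) + (uw)(ξ) (vz)(η)`, where `e` is the one-dimensional
stiffness integrand. By Fubini, `C̃` therefore factors through the one-dimensional mass and
stiffness forms, whose values on the `φ_i` are the hypotheses.
-/

open Set

theorem pder_mul_apply (a b : ℕ) (u v : ℝ → ℝ) (p : ℝ × ℝ) :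
    pder a b (fun q => u q.1 * v q.2) p = iteratedDeriv a u p.1 * iteratedDeriv b v p.2 := by
  simp only [pder, iteratedDeriv_const_mul_field, iteratedDeriv_mul_const_field]

theorem MeasureTheory.IntegrableOn.mul_prod {α β L : Type*} [MeasurableSpace α]
    [MeasurableSpace β] [NormedRing L] {μ : Measure α} {ν : Measure β} [SFinite μ] [SFinite ν]
    {f : α → L} {g : β → L} {s : Set α} {t : Set β}
    (hf : IntegrableOn f s μ) (hg : IntegrableOn g t ν) :
    IntegrableOn (fun p : α × β => f p.1 * g p.2) (s ×ˢ t) (μ.prod ν) := by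
  rw [IntegrableOn, ← Measure.prod_restrict]
  exact Integrable.mul_prod hf hg

theorem Continuous.integrableOn_Ioo {f : ℝ → ℝ} (hf : Continuous f) (a b : ℝ) :
    IntegrableOn f (Ioo a b) :=
  hf.integrableOn_Icc.mono_set Ioo_subset_Icc_self

noncomputable def massForm (u w : ℝ → ℝ) : ℝ :=
  ∫ ξ in Ioo (-1 : ℝ) 1, u ξ * w ξ

noncomputable def stiffnessIntegrand (u w : ℝ → ℝ) (ξ : ℝ) : ℝ :=
  iteratedDeriv 4 u ξ * iteratedDeriv 4 w ξ + iteratedDeriv 3 u ξ * iteratedDeriv 3 w ξ +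
    iteratedDeriv 2 u ξ * iteratedDeriv 2 w ξ + deriv u ξ * deriv w ξ

noncomputable def stiffnessForm (u w : ℝ → ℝ) : ℝ :=
  ∫ ξ in Ioo (-1 : ℝ) 1, stiffnessIntegrand u w ξ

theorem continuous_stiffnessIntegrand {u w : ℝ → ℝ} (hu : ContDiff ℝ 4 u) (hw : ContDiff ℝ 4 w) :
    Continuous (stiffnessIntegrand u w) := by
  unfold stiffnessIntegrand
  rw [← iteratedDeriv_one, ← iteratedDeriv_one]
  fun_prop (disch := norm_num)

theorem Ctilde_mul_mul {u v w z : ℝ → ℝ} (hu : ContDiff ℝ 4 u) (hv : ContDiff ℝ 4 v)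
    (hw : ContDiff ℝ 4 w) (hz : ContDiff ℝ 4 z) :
    Ctilde (fun p => u p.1 * v p.2) (fun p => w p.1 * z p.2) =
      stiffnessForm u w * massForm v z + massForm u w * stiffnessForm v z +
        massForm u w * massForm v z := by
  have hint {f g : ℝ → ℝ} (hf : Continuous f) (hg : Continuous g) :
      IntegrableOn (fun p : ℝ × ℝ => f p.1 * g p.2) Sq := by
    rw [Sq, Measure.volume_eq_prod]
    exact (hf.integrableOn_Ioo _ _).mul_prod (hg.integrableOn_Ioo _ _)
  have hE_uw := continuous_stiffnessIntegrand hu hw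
  have hE_vz := continuous_stiffnessIntegrand hv hz
  have hM_uw : Continuous fun ξ => u ξ * w ξ := hu.continuous.mul hw.continuous
  have hM_vz : Continuous fun η => v η * z η := hv.continuous.mul hz.continuous
  calc Ctilde (fun p => u p.1 * v p.2) (fun p => w p.1 * z p.2)
      = ∫ p in Sq, (stiffnessIntegrand u w p.1 * (v p.2 * z p.2) +
          u p.1 * w p.1 * stiffnessIntegrand v z p.2 + u p.1 * w p.1 * (v p.2 * z p.2)) := by
        unfold Ctilde
        congr 1 with p
        simp only [pder_mul_apply, stiffnessIntegrand, iteratedDeriv_zero, iteratedDeriv_one]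
        ring
    _ = _ := by
        rw [integral_add _ (hint hM_uw hM_vz), integral_add (hint hE_uw hM_vz) (hint hM_uw hE_vz), Sq, Measure.volume_eq_prod,
          setIntegral_prod_mul (stiffnessIntegrand u w) (fun η => v η * z η),
          setIntegral_prod_mul (fun ξ => u ξ * w ξ) (stiffnessIntegrand v z),
          setIntegral_prod_mul (fun ξ => u ξ * w ξ) (fun η => v η * z η)]
        · rfl
        · exact (hint hE_uw hM_vz).add (hint hM_uw hE_vz)

theorem stmt_14 (W : ℕ) (φ : ℕ → ℝ → ℝ) (μ : ℕ → ℝ)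
    (hpoly : ∀ i ≤ W, ∃ q : Polynomial ℝ, ∀ x : ℝ, φ i x = q.eval x)
    (horth : ∀ i ≤ W, ∀ j ≤ W,
      (∫ ξ in Set.Ioo (-1 : ℝ) 1, φ i ξ * φ j ξ) = if i = j then 1 else 0)
    (hE : ∀ i ≤ W, ∀ j ≤ W,
      (∫ ξ in Set.Ioo (-1 : ℝ) 1,
          (iteratedDeriv 4 (φ i) ξ * iteratedDeriv 4 (φ j) ξ +
            iteratedDeriv 3 (φ i) ξ * iteratedDeriv 3 (φ j) ξ +
            iteratedDeriv 2 (φ i) ξ * iteratedDeriv 2 (φ j) ξ +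
            deriv (φ i) ξ * deriv (φ j) ξ)) = if i = j then μ i else 0) :
    ∀ i ≤ W, ∀ j ≤ W, ∀ k ≤ W, ∀ l ≤ W,
      Ctilde (fun p => φ i p.1 * φ j p.2) (fun p => φ k p.1 * φ l p.2) =
        (μ i + μ j + 1) * (if i = k then 1 else 0) * (if j = l then 1 else 0) := by
  intro i hi j hj k hk l hl
  have hsmooth : ∀ m ≤ W, ContDiff ℝ 4 (φ m) := fun m hm => by
    obtain ⟨q, hq⟩ := hpoly m hm
    rw [funext hq]
    exact Polynomial.contDiff_aeval q 4
  rw [Ctilde_mul_mul (hsmooth i hi) (hsmooth j hj) (hsmooth k hk) (hsmooth l hl)]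
  simp only [massForm, stiffnessForm, stiffnessIntegrand]
  rw [horth i hi k hk, horth j hj l hl, hE i hi k hk, hE j hj l hl]
  split_ifs <;> ring
end
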